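/- Under perfect grading, for any two types σ, σ' and any 0 < x < y < 1, the quantity Pr[x ▷ σ]·Pr[y ▷ σ'] − Pr[x ▷ σ']·Pr[y ▷ σ] is positive, zero, or negative according as B(σ) − B(σ') is positive, zero, or negative. -/

import Mathlib

/-!
After pulling out the positive combinatorial constants, `Pr[z ▷ σ]` is `z ^ a (1 - z) ^ b` with
`a = Σ σᵢ - k` and `a + b = k² - k` independent of `σ`, while `B(σ) - B(σ') = a' - a`.
If `a' = a + d` the cross difference factors as
`x ^ a (1 - x) ^ b' y ^ a (1 - y) ^ b' · (((1 - x) y) ^ d - (x (1 - y)) ^ d)`,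
which is positive because `x (1 - y) < (1 - x) y` is just `x < y`.
-/

/-- Probability, under perfect grading, that a paper with ground-truth rank
`x ∈ (0,1)` receives type `σ`. -/
noncomputable def perfectProb (k : ℕ) (σ : Fin k → ℕ) (x : ℝ) : ℝ :=
  (k.factorial : ℝ) /
      (∏ i ∈ Finset.Icc 1 k, ((Finset.univ.filter fun m => σ m = i).card.factorial : ℝ)) *
    (∏ i, ((k - 1).choose (σ i - 1) : ℝ)) *
    x ^ (k ^ 2 - (k ^ 2 + k - ∑ i, σ i)) * (1 - x) ^ ((k ^ 2 + k - ∑ i, σ i) - k)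

/-- The Borda score `B(σ) = k² + k − Σᵢ σᵢ` of a type `σ`. -/
def bordaScore (k : ℕ) (σ : Fin k → ℕ) : ℤ :=
  (k : ℤ) ^ 2 + k - ∑ i, (σ i : ℤ)

theorem Real.sign_mul_of_pos {c : ℝ} (hc : 0 < c) (r : ℝ) : Real.sign (c * r) = Real.sign r := by
  rcases lt_trichotomy r 0 with hr | rfl | hr
  · rw [sign_of_neg (mul_neg_of_pos_of_neg hc hr), sign_of_neg hr]
  · rw [mul_zero]
  · rw [sign_of_pos (mul_pos hc hr), sign_of_pos hr]

section CrossDifference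

variable {x y : ℝ}

theorem bernstein_cross_lt (hx : 0 < x) (hxy : x < y) (hy : y < 1) (a b : ℕ) {d : ℕ}
    (hd : d ≠ 0) :
    x ^ (a + d) * (1 - x) ^ b * (y ^ a * (1 - y) ^ (b + d)) <
      x ^ a * (1 - x) ^ (b + d) * (y ^ (a + d) * (1 - y) ^ b) := by
  have hodds : x * (1 - y) < (1 - x) * y := by nlinarith
  have hcommon : 0 < x ^ a * (1 - x) ^ b * (y ^ a * (1 - y) ^ b) := by
    have : 0 < 1 - x := by linarith
    have : 0 < 1 - y := by linarith
    have : 0 < y := hx.trans hxy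
    positivity
  calc x ^ (a + d) * (1 - x) ^ b * (y ^ a * (1 - y) ^ (b + d))
      = x ^ a * (1 - x) ^ b * (y ^ a * (1 - y) ^ b) * (x * (1 - y)) ^ d := by
        rw [mul_pow]; ring
    _ < x ^ a * (1 - x) ^ b * (y ^ a * (1 - y) ^ b) * ((1 - x) * y) ^ d := by
        gcongr
    _ = x ^ a * (1 - x) ^ (b + d) * (y ^ (a + d) * (1 - y) ^ b) := by rw [mul_pow]; ring

theorem sign_bernstein_cross (hx : 0 < x) (hxy : x < y) (hy : y < 1) {a b a' b' : ℕ}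
    (hdeg : a + b = a' + b') :
    Real.sign (x ^ a * (1 - x) ^ b * (y ^ a' * (1 - y) ^ b') -
        x ^ a' * (1 - x) ^ b' * (y ^ a * (1 - y) ^ b)) =
      (Int.sign ((a' : ℤ) - a) : ℝ) := by
  rcases lt_trichotomy a a' with h | rfl | h
  · obtain ⟨d, hd, rfl⟩ : ∃ d, d ≠ 0 ∧ a' = a + d := ⟨a' - a, by omega, by omega⟩
    obtain rfl : b = b' + d := by omega
    rw [Real.sign_of_pos (sub_pos.2 (bernstein_cross_lt hx hxy hy a b' hd)),
      Int.sign_eq_one_of_pos (by omega)]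
    norm_num
  · obtain rfl : b = b' := by omega
    simp
  · obtain ⟨d, hd, rfl⟩ : ∃ d, d ≠ 0 ∧ a = a' + d := ⟨a - a', by omega, by omega⟩
    obtain rfl : b' = b + d := by omega
    rw [Real.sign_of_neg (sub_neg.2 (bernstein_cross_lt hx hxy hy a' b hd)),
      Int.sign_eq_neg_one_of_neg (by omega)]
    norm_num

end CrossDifference

section PerfectGrading

variable {k : ℕ} {σ : Fin k → ℕ}

noncomputable def perfectCoeff (k : ℕ) (σ : Fin k → ℕ) : ℝ :=
  (k.factorial : ℝ) /
      (∏ i ∈ Finset.Icc 1 k, ((Finset.univ.filter fun m => σ m = i).card.factorial : ℝ)) *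
    (∏ i, ((k - 1).choose (σ i - 1) : ℝ))

theorem perfectCoeff_pos (hσ : ∀ i, σ i ≤ k) : 0 < perfectCoeff k σ := by
  unfold perfectCoeff
  refine mul_pos (div_pos (by positivity) (Finset.prod_pos fun _ _ => by positivity))
    (Finset.prod_pos fun i _ => ?_)
  exact_mod_cast Nat.choose_pos (Nat.sub_le_sub_right (hσ i) 1)

theorem sum_mem_Icc_of_forall_mem_Icc (hσ : ∀ i, σ i ∈ Finset.Icc 1 k) :
    ∑ i, σ i ∈ Finset.Icc k (k ^ 2) := by
  refine Finset.mem_Icc.2 ⟨?_, ?_⟩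
  · simpa using Finset.sum_le_sum fun i (_ : i ∈ Finset.univ) => (Finset.mem_Icc.1 (hσ i)).1
  · simpa [sq] using Finset.sum_le_sum fun i (_ : i ∈ Finset.univ) => (Finset.mem_Icc.1 (hσ i)).2

theorem perfectProb_eq (hσ : ∀ i, σ i ∈ Finset.Icc 1 k) (z : ℝ) :
    perfectProb k σ z =
      perfectCoeff k σ * (z ^ (∑ i, σ i - k) * (1 - z) ^ (k ^ 2 - ∑ i, σ i)) := by
  obtain ⟨hk, hk2⟩ := Finset.mem_Icc.1 (sum_mem_Icc_of_forall_mem_Icc hσ)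
  rw [perfectProb, perfectCoeff, show k ^ 2 - (k ^ 2 + k - ∑ i, σ i) = ∑ i, σ i - k by omega,
    show k ^ 2 + k - ∑ i, σ i - k = k ^ 2 - ∑ i, σ i by omega]
  ring

theorem bordaScore_sub_bordaScore {σ' : Fin k → ℕ} (hσ : ∀ i, σ i ∈ Finset.Icc 1 k)
    (hσ' : ∀ i, σ' i ∈ Finset.Icc 1 k) :
    bordaScore k σ - bordaScore k σ' = ((∑ i, σ' i - k : ℕ) : ℤ) - (∑ i, σ i - k : ℕ) := by
  have := (Finset.mem_Icc.1 (sum_mem_Icc_of_forall_mem_Icc hσ)).1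
  have := (Finset.mem_Icc.1 (sum_mem_Icc_of_forall_mem_Icc hσ')).1
  simp only [bordaScore]
  push_cast [*]
  ring

end PerfectGrading

theorem stmt_7_general (k : ℕ) (σ σ' : Fin k → ℕ)
    (hσ : ∀ i, σ i ∈ Finset.Icc 1 k) (hσ' : ∀ i, σ' i ∈ Finset.Icc 1 k)
    (x y : ℝ) (hx : 0 < x) (hxy : x < y) (hy : y < 1) :
    Real.sign
        (perfectProb k σ x * perfectProb k σ' y - perfectProb k σ' x * perfectProb k σ y) =
      (Int.sign (bordaScore k σ - bordaScore k σ') : ℝ) := by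
  obtain ⟨hk, hk2⟩ := Finset.mem_Icc.1 (sum_mem_Icc_of_forall_mem_Icc hσ)
  obtain ⟨hk', hk2'⟩ := Finset.mem_Icc.1 (sum_mem_Icc_of_forall_mem_Icc hσ')
  have hcross := sign_bernstein_cross hx hxy hy (a := ∑ i, σ i - k) (a' := ∑ i, σ' i - k)
    (b := k ^ 2 - ∑ i, σ i) (b' := k ^ 2 - ∑ i, σ' i) (by omega)
  have hcoeff := mul_pos (perfectCoeff_pos fun i => (Finset.mem_Icc.1 (hσ i)).2)
    (perfectCoeff_pos fun i => (Finset.mem_Icc.1 (hσ' i)).2)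
  rw [← Real.sign_mul_of_pos hcoeff] at hcross
  rw [bordaScore_sub_bordaScore hσ hσ', ← hcross, perfectProb_eq hσ, perfectProb_eq hσ',
    perfectProb_eq hσ, perfectProb_eq hσ']
  congr 1
  ring

/-- Under perfect grading, for any two types `σ, σ'` and any `0 < x < y < 1`,
the quantity `Pr[x ▷ σ]·Pr[y ▷ σ'] − Pr[x ▷ σ']·Pr[y ▷ σ]` is positive, zero,
or negative according as `B(σ) − B(σ')` is positive, zero, or negative. -/
theorem stmt_7 (k : ℕ) (σ σ' : Fin k → ℕ)
    (hmono : Monotone σ) (hmono' : Monotone σ')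
    (hσ : ∀ i, σ i ∈ Finset.Icc 1 k) (hσ' : ∀ i, σ' i ∈ Finset.Icc 1 k)
    (x y : ℝ) (hx : 0 < x) (hxy : x < y) (hy : y < 1) :
    Real.sign
        (perfectProb k σ x * perfectProb k σ' y - perfectProb k σ' x * perfectProb k σ y) =
      (Int.sign (bordaScore k σ - bordaScore k σ') : ℝ) :=
  stmt_7_general k σ σ' hσ hσ' x y hx hxy hy
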